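/- Let V be a finite-dimensional real vector space, A a linear endomorphism of V, and V = V₋₂ ⊕ V₋₁ ⊕ V₀ ⊕ V₁ ⊕ V₂ a decomposition into eigenspaces of A with A = j·id on V_j for j = −2, −1, 0, 1, 2. Let Ω ⊆ V be a closed, pointed convex cone with exp(tA)(Ω) = Ω for all t ∈ ℝ, and suppose Ω ∩ V₁ = {0} and Ω ∩ V₋₁ = {0}. Let F be a closed face of Ω with exp(tA)(F) = F for all t ∈ ℝ. Then F ∩ V₂ and F ∩ V₋₂ are faces of Ω, and F ∩ (V₋₂ ⊕ V₂) = (F ∩ V₋₂) + (F ∩ V₂). -/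

import Mathlib

open scoped Pointwise
open Filter Topology

set_option maxHeartbeats 2000000
set_option synthInstance.maxHeartbeats 1000000

open NormedSpace in
private lemma exp_apply_eigen' {V : Type*} [NormedAddCommGroup V] [NormedSpace ℝ V]
    [CompleteSpace V] (B : V →L[ℝ] V) (c : ℝ) (v : V) (h : B v = c • v) :
    NormedSpace.exp B v = Real.exp c • v := by
  have hpow : ∀ n : ℕ, (B ^ n) v = c ^ n • v := by
    intro n
    induction n with
    | zero => simp
    | succ n ih =>
      rw [pow_succ, ContinuousLinearMap.mul_apply, h, map_smul, ih, smul_smul, pow_succ,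
        mul_comm]
  have hsum : Summable fun n : ℕ => ((n.factorial : ℝ))⁻¹ • B ^ n :=
    expSeries_summable' (𝕂 := ℝ) B
  have hmt := ((ContinuousLinearMap.apply ℝ V v).map_tsum hsum)
  rw [exp_eq_tsum (𝕂 := ℝ)]
  calc (∑' n : ℕ, ((n.factorial : ℝ))⁻¹ • B ^ n) v
      = ∑' n : ℕ, (((n.factorial : ℝ))⁻¹ • B ^ n) v := by
        simpa using hmt
    _ = ∑' n : ℕ, ((((n.factorial : ℝ))⁻¹ * c ^ n)) • v := by
        congr 1; funext n
        simp [hpow n, smul_smul]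
    _ = (∑' n : ℕ, (((n.factorial : ℝ))⁻¹ * c ^ n)) • v := by
        rw [Summable.tsum_smul_const]
        exact (expSeries_summable' (𝕂 := ℝ) c).congr (fun n => by simp [smul_eq_mul])
    _ = Real.exp c • v := by
        congr 1
        rw [Real.exp_eq_exp_ℝ, exp_eq_tsum (𝕂 := ℝ)]
        simp [smul_eq_mul]

private lemma decomp_exists' {V : Type*} [AddCommGroup V] [Module ℝ V]
    (Vm2 Vm1 V0 V1 V2 : Submodule ℝ V)
    (hdirect : DirectSum.IsInternal ![Vm2, Vm1, V0, V1, V2]) (x : V) :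
    ∃ a ∈ Vm2, ∃ b ∈ Vm1, ∃ c ∈ V0, ∃ d ∈ V1, ∃ e ∈ V2, x = a + b + c + d + e := by
  have htop : (⨆ i, ![Vm2, Vm1, V0, V1, V2] i) = ⊤ := hdirect.submodule_iSup_eq_top
  have hx : x ∈ (⨆ i, ![Vm2, Vm1, V0, V1, V2] i) := htop ▸ Submodule.mem_top
  refine Submodule.iSup_induction _ (motive := fun y => ∃ a ∈ Vm2, ∃ b ∈ Vm1, ∃ c ∈ V0, ∃ d ∈ V1,
    ∃ e ∈ V2, y = a + b + c + d + e) hx ?_ ?_ ?_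
  · intro i y hy
    fin_cases i <;> simp at hy
    · exact ⟨y, hy, 0, zero_mem _, 0, zero_mem _, 0, zero_mem _, 0, zero_mem _, by simp⟩
    · exact ⟨0, zero_mem _, y, hy, 0, zero_mem _, 0, zero_mem _, 0, zero_mem _, by simp⟩
    · exact ⟨0, zero_mem _, 0, zero_mem _, y, hy, 0, zero_mem _, 0, zero_mem _, by simp⟩
    · exact ⟨0, zero_mem _, 0, zero_mem _, 0, zero_mem _, y, hy, 0, zero_mem _, by simp⟩
    · exact ⟨0, zero_mem _, 0, zero_mem _, 0, zero_mem _, 0, zero_mem _, y, hy, by simp⟩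
  · exact ⟨0, zero_mem _, 0, zero_mem _, 0, zero_mem _, 0, zero_mem _, 0, zero_mem _, by simp⟩
  · rintro y z ⟨a, ha, b, hb, c, hc, d, hd, e, he, rfl⟩
      ⟨a', ha', b', hb', c', hc', d', hd', e', he', rfl⟩
    exact ⟨a + a', add_mem ha ha', b + b', add_mem hb hb', c + c', add_mem hc hc',
      d + d', add_mem hd hd', e + e', add_mem he he', by abel⟩

private lemma decomp_zero' {V : Type*} [AddCommGroup V] [Module ℝ V]
    (Vm2 Vm1 V0 V1 V2 : Submodule ℝ V)
    (hdirect : DirectSum.IsInternal ![Vm2, Vm1, V0, V1, V2])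
    {a b c d e : V} (ha : a ∈ Vm2) (hb : b ∈ Vm1) (hc : c ∈ V0) (hd : d ∈ V1) (he : e ∈ V2)
    (hsum : a + b + c + d + e = 0) :
    a = 0 ∧ b = 0 ∧ c = 0 ∧ d = 0 ∧ e = 0 := by
  set p : Fin 5 → Submodule ℝ V := ![Vm2, Vm1, V0, V1, V2] with hp
  have ha' : a ∈ p 0 := ha
  have hb' : b ∈ p 1 := hb
  have hc' : c ∈ p 2 := hc
  have hd' : d ∈ p 3 := hd
  have he' : e ∈ p 4 := he
  set E := (LinearEquiv.ofBijective (DirectSum.coeLinearMap p) hdirect).symm with hE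
  have hsum' : E a + E b + E c + E d + E e = 0 := by
    rw [← map_add, ← map_add, ← map_add, ← map_add, hsum, map_zero]
  have key : ∀ i : Fin 5, (E a) i + (E b) i + (E c) i + (E d) i + (E e) i = 0 := by
    intro i
    have := congrArg (fun z => z i) hsum'
    simpa [DirectSum.add_apply] using this
  have k0 := key 0
  have k1 := key 1
  have k2 := key 2
  have k3 := key 3
  have k4 := key 4
  rw [hdirect.ofBijective_coeLinearMap_of_mem ha',
    hdirect.ofBijective_coeLinearMap_of_mem_ne (by decide) hb',
    hdirect.ofBijective_coeLinearMap_of_mem_ne (by decide) hc',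
    hdirect.ofBijective_coeLinearMap_of_mem_ne (by decide) hd',
    hdirect.ofBijective_coeLinearMap_of_mem_ne (by decide) he'] at k0
  rw [hdirect.ofBijective_coeLinearMap_of_mem_ne (by decide) ha',
    hdirect.ofBijective_coeLinearMap_of_mem hb',
    hdirect.ofBijective_coeLinearMap_of_mem_ne (by decide) hc',
    hdirect.ofBijective_coeLinearMap_of_mem_ne (by decide) hd',
    hdirect.ofBijective_coeLinearMap_of_mem_ne (by decide) he'] at k1
  rw [hdirect.ofBijective_coeLinearMap_of_mem_ne (by decide) ha',
    hdirect.ofBijective_coeLinearMap_of_mem_ne (by decide) hb',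
    hdirect.ofBijective_coeLinearMap_of_mem hc',
    hdirect.ofBijective_coeLinearMap_of_mem_ne (by decide) hd',
    hdirect.ofBijective_coeLinearMap_of_mem_ne (by decide) he'] at k2
  rw [hdirect.ofBijective_coeLinearMap_of_mem_ne (by decide) ha',
    hdirect.ofBijective_coeLinearMap_of_mem_ne (by decide) hb',
    hdirect.ofBijective_coeLinearMap_of_mem_ne (by decide) hc',
    hdirect.ofBijective_coeLinearMap_of_mem hd',
    hdirect.ofBijective_coeLinearMap_of_mem_ne (by decide) he'] at k3
  rw [hdirect.ofBijective_coeLinearMap_of_mem_ne (by decide) ha',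
    hdirect.ofBijective_coeLinearMap_of_mem_ne (by decide) hb',
    hdirect.ofBijective_coeLinearMap_of_mem_ne (by decide) hc',
    hdirect.ofBijective_coeLinearMap_of_mem_ne (by decide) hd',
    hdirect.ofBijective_coeLinearMap_of_mem he'] at k4
  simp only [add_zero, zero_add] at k0 k1 k2 k3 k4
  exact ⟨congrArg Subtype.val k0, congrArg Subtype.val k1, congrArg Subtype.val k2,
    congrArg Subtype.val k3, congrArg Subtype.val k4⟩

/-- Let `V` be a finite-dimensional real vector space, `A` an endomorphism of `V`, and
`V = V₋₂ ⊕ V₋₁ ⊕ V₀ ⊕ V₁ ⊕ V₂` a decomposition into eigenspaces of `A` with `A = j·id`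
on `Vⱼ`.  Let `Ω ⊆ V` be a closed pointed convex cone with `exp (t A) Ω = Ω` for all
`t`, with `Ω ∩ V₁ = {0}` and `Ω ∩ V₋₁ = {0}`.  If `F` is a closed face of `Ω` with
`exp (t A) F = F` for all `t`, then `F ∩ V₂` and `F ∩ V₋₂` are faces of `Ω`, and
`F ∩ (V₋₂ ⊕ V₂) = (F ∩ V₋₂) + (F ∩ V₂)`. -/
theorem face_inter_extreme_eigenspaces {V : Type*}
    [NormedAddCommGroup V] [NormedSpace ℝ V] [FiniteDimensional ℝ V]
    (A : V →ₗ[ℝ] V) (Vm2 Vm1 V0 V1 V2 : Submodule ℝ V)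
    (hdirect : DirectSum.IsInternal ![Vm2, Vm1, V0, V1, V2])
    (hm2 : ∀ v ∈ Vm2, A v = (-2 : ℝ) • v)
    (hm1 : ∀ v ∈ Vm1, A v = (-1 : ℝ) • v)
    (h0 : ∀ v ∈ V0, A v = (0 : ℝ) • v)
    (h1 : ∀ v ∈ V1, A v = (1 : ℝ) • v)
    (h2 : ∀ v ∈ V2, A v = (2 : ℝ) • v)
    (Ω : Set V) (hΩclosed : IsClosed Ω) (hΩconvex : Convex ℝ Ω)
    (hΩcone : ∀ c : ℝ, 0 < c → c • Ω ⊆ Ω)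
    (hΩpointed : Ω ∩ (-Ω) = {0})
    (hinv : ∀ t : ℝ,
      ⇑(NormedSpace.exp (LinearMap.toContinuousLinearMap (t • A))) '' Ω = Ω)
    (hV1 : Ω ∩ (V1 : Set V) = {0})
    (hVm1 : Ω ∩ (Vm1 : Set V) = {0})
    (F : Set V) (hFclosed : IsClosed F) (hFconvex : Convex ℝ F)
    (hFface : IsExtreme ℝ Ω F)
    (hFinv : ∀ t : ℝ,
      ⇑(NormedSpace.exp (LinearMap.toContinuousLinearMap (t • A))) '' F = F) :
    (Convex ℝ (F ∩ (V2 : Set V)) ∧ IsExtreme ℝ Ω (F ∩ (V2 : Set V))) ∧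
    (Convex ℝ (F ∩ (Vm2 : Set V)) ∧ IsExtreme ℝ Ω (F ∩ (Vm2 : Set V))) ∧
    F ∩ ((Vm2 ⊔ V2 : Submodule ℝ V) : Set V) =
      (F ∩ (Vm2 : Set V)) + (F ∩ (V2 : Set V)) := by
  set T : ℝ → V → V :=
    fun t => ⇑(NormedSpace.exp (LinearMap.toContinuousLinearMap (t • A))) with hTdef
  -- basic eigen action
  have hT : ∀ (s j : ℝ) (v : V), A v = j • v → T s v = Real.exp (s * j) • v := by
    intro s j v hv
    have hB : (LinearMap.toContinuousLinearMap (s • A)) v = (s * j) • v := by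
      simp [hv, smul_smul]
    exact exp_apply_eigen' _ _ _ hB
  -- membership facts
  have hΩ0 : (0 : V) ∈ Ω := by
    have : (0 : V) ∈ Ω ∩ (-Ω) := by rw [hΩpointed]; rfl
    exact this.1
  have hΩsmul : ∀ c : ℝ, 0 < c → ∀ y ∈ Ω, c • y ∈ Ω :=
    fun c hc y hy => hΩcone c hc (Set.smul_mem_smul_set hy)
  have hΩinv : ∀ t : ℝ, ∀ y ∈ Ω, T t y ∈ Ω := by
    intro t y hy
    rw [hTdef]
    rw [← hinv t]
    exact Set.mem_image_of_mem _ hy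
  have hFinv' : ∀ t : ℝ, ∀ y ∈ F, T t y ∈ F := by
    intro t y hy
    rw [hTdef, ← hFinv t]
    exact Set.mem_image_of_mem _ hy
  have hFsub : F ⊆ Ω := hFface.1
  have hF0 : ∀ y ∈ F, (0 : V) ∈ F := by
    intro y hy
    have h2y : (2 : ℝ) • y ∈ Ω := hΩsmul 2 (by norm_num) y (hFsub hy)
    have hseg : y ∈ openSegment ℝ (0 : V) ((2 : ℝ) • y) := by
      refine ⟨1/2, 1/2, by norm_num, by norm_num, by norm_num, ?_⟩
      rw [smul_zero, zero_add, smul_smul]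
      norm_num
    exact (hFface.2 hΩ0 h2y hy hseg)
  have hFsmul : ∀ c : ℝ, 0 < c → ∀ y ∈ F, c • y ∈ F := by
    intro c hc y hy
    rcases le_or_gt c 1 with hle | hgt
    · have := hFconvex (hF0 y hy) hy (a := 1 - c) (b := c) (by linarith) (le_of_lt hc)
        (by ring)
      simpa using this
    · have hcy : c • y ∈ Ω := hΩsmul c hc y (hFsub hy)
      have hseg : y ∈ openSegment ℝ (0 : V) (c • y) := by
        refine ⟨1 - c⁻¹, c⁻¹, ?_, ?_, by ring, ?_⟩
        · have : c⁻¹ < 1 := inv_lt_one_of_one_lt₀ hgt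
          linarith
        · exact inv_pos.mpr hc
        · rw [smul_zero, zero_add, smul_smul, inv_mul_cancel₀ (ne_of_gt hc), one_smul]
      exact hFface.2 hcy hΩ0 hy (by rw [openSegment_symm]; exact hseg)
  -- tendsto helpers
  have htenneg : ∀ m : ℝ, m < 0 → ∀ v : V,
      Tendsto (fun t : ℝ => Real.exp (m * t) • v) atTop (𝓝 0) := by
    intro m hm v
    have h1 : Tendsto (fun t : ℝ => m * t) atTop atBot :=
      (tendsto_const_mul_atBot_of_neg hm).mpr tendsto_id
    have := (Real.tendsto_exp_atBot.comp h1).smul_const v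
    simpa using this
  have hten0 : ∀ m : ℝ, m = 0 → ∀ v : V,
      Tendsto (fun t : ℝ => Real.exp (m * t) • v) atTop (𝓝 v) := by
    intro m hm v
    subst hm
    simpa using (tendsto_const_nhds : Tendsto (fun _ : ℝ => v) atTop (𝓝 v))
  -- master limit lemma
  have master : ∀ S : Set V, IsClosed S → (∀ c : ℝ, 0 < c → ∀ y ∈ S, c • y ∈ S) →
      (∀ t : ℝ, ∀ y ∈ S, T t y ∈ S) →
      ∀ x a b c d e : V, a ∈ Vm2 → b ∈ Vm1 → c ∈ V0 → d ∈ V1 → e ∈ V2 →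
      x = a + b + c + d + e → x ∈ S →
      (a ∈ S) ∧ (e ∈ S) ∧ (a = 0 → b ∈ S) ∧ (a = 0 → b = 0 → c ∈ S) ∧
      (a = 0 → b = 0 → c = 0 → d ∈ S) ∧ (e = 0 → d ∈ S) ∧ (e = 0 → d = 0 → c ∈ S) ∧
      (e = 0 → d = 0 → c = 0 → b ∈ S) := by
    intro S hScl hSsm hSinv x a b c d e ha hb hc hd he hxeq hxS
    have hTx : ∀ s : ℝ, T s x = Real.exp (s * (-2)) • a + Real.exp (s * (-1)) • b +
        Real.exp (s * 0) • c + Real.exp (s * 1) • d + Real.exp (s * 2) • e := by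
      intro s
      rw [hxeq]
      have : T s (a + b + c + d + e) = T s a + T s b + T s c + T s d + T s e := by
        rw [hTdef]
        simp only [map_add]
      rw [this, hT s (-2) a (hm2 a ha), hT s (-1) b (hm1 b hb), hT s 0 c (h0 c hc),
        hT s 1 d (h1 d hd), hT s 2 e (h2 e he)]
    have hform : ∀ k σ t : ℝ, Real.exp (k * t) • T (σ * t) x =
        Real.exp ((k - 2*σ) * t) • a + Real.exp ((k - σ) * t) • b +
        Real.exp (k * t) • c + Real.exp ((k + σ) * t) • d +
        Real.exp ((k + 2*σ) * t) • e := by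
      intro k σ t
      rw [hTx (σ * t)]
      simp only [smul_add, smul_smul, ← Real.exp_add]
      ring_nf
    have hmain : ∀ (k σ : ℝ) (L : V),
        Tendsto (fun t => Real.exp (k * t) • T (σ * t) x) atTop (𝓝 L) → L ∈ S := by
      intro k σ L hL
      refine hScl.mem_of_tendsto hL (Eventually.of_forall fun t => ?_)
      exact hSsm _ (Real.exp_pos _) _ (hSinv _ _ hxS)
    have hzero : ∀ (m : ℝ) (v : V), v = 0 →
        Tendsto (fun t : ℝ => Real.exp (m * t) • v) atTop (𝓝 0) := by
      intro m v hv
      subst hv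
      simpa using (tendsto_const_nhds : Tendsto (fun _ : ℝ => (0:V)) atTop (𝓝 0))
    refine ⟨?_, ?_, ?_, ?_, ?_, ?_, ?_, ?_⟩
    · -- a ∈ S : k = -2, σ = -1
      refine hmain (-2) (-1) a ?_
      have hlim := ((((hten0 ((-2:ℝ) - 2*(-1)) (by norm_num) a).add
        (htenneg ((-2:ℝ) - (-1)) (by norm_num) b)).add
        (htenneg (-2:ℝ) (by norm_num) c)).add
        (htenneg ((-2:ℝ) + (-1)) (by norm_num) d)).add
        (htenneg ((-2:ℝ) + 2*(-1)) (by norm_num) e)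
      have hlim' := hlim.congr fun t => (hform (-2) (-1) t).symm
      simpa using hlim'
    · -- e ∈ S : k = -2, σ = 1
      refine hmain (-2) 1 e ?_
      have hlim := ((((htenneg ((-2:ℝ) - 2*1) (by norm_num) a).add
        (htenneg ((-2:ℝ) - 1) (by norm_num) b)).add
        (htenneg (-2:ℝ) (by norm_num) c)).add
        (htenneg ((-2:ℝ) + 1) (by norm_num) d)).add
        (hten0 ((-2:ℝ) + 2*1) (by norm_num) e)
      have hlim' := hlim.congr fun t => (hform (-2) 1 t).symm
      simpa using hlim'
    · -- b ∈ S given a = 0 : k = -1, σ = -1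
      intro ha0
      refine hmain (-1) (-1) b ?_
      have hlim := ((((hzero ((-1:ℝ) - 2*(-1)) a ha0).add
        (hten0 ((-1:ℝ) - (-1)) (by norm_num) b)).add
        (htenneg (-1:ℝ) (by norm_num) c)).add
        (htenneg ((-1:ℝ) + (-1)) (by norm_num) d)).add
        (htenneg ((-1:ℝ) + 2*(-1)) (by norm_num) e)
      have hlim' := hlim.congr fun t => (hform (-1) (-1) t).symm
      simpa using hlim'
    · -- c ∈ S given a = b = 0 : k = 0, σ = -1
      intro ha0 hb0
      refine hmain 0 (-1) c ?_
      have hlim := ((((hzero ((0:ℝ) - 2*(-1)) a ha0).add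
        (hzero ((0:ℝ) - (-1)) b hb0)).add
        (hten0 (0:ℝ) (by norm_num) c)).add
        (htenneg ((0:ℝ) + (-1)) (by norm_num) d)).add
        (htenneg ((0:ℝ) + 2*(-1)) (by norm_num) e)
      have hlim' := hlim.congr fun t => (hform 0 (-1) t).symm
      simpa using hlim'
    · -- d ∈ S given a = b = c = 0 : k = 1, σ = -1
      intro ha0 hb0 hc0
      refine hmain 1 (-1) d ?_
      have hlim := ((((hzero ((1:ℝ) - 2*(-1)) a ha0).add
        (hzero ((1:ℝ) - (-1)) b hb0)).add
        (hzero (1:ℝ) c hc0)).add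
        (hten0 ((1:ℝ) + (-1)) (by norm_num) d)).add
        (htenneg ((1:ℝ) + 2*(-1)) (by norm_num) e)
      have hlim' := hlim.congr fun t => (hform 1 (-1) t).symm
      simpa using hlim'
    · -- d ∈ S given e = 0 : k = -1, σ = 1
      intro he0
      refine hmain (-1) 1 d ?_
      have hlim := ((((htenneg ((-1:ℝ) - 2*1) (by norm_num) a).add
        (htenneg ((-1:ℝ) - 1) (by norm_num) b)).add
        (htenneg (-1:ℝ) (by norm_num) c)).add
        (hten0 ((-1:ℝ) + 1) (by norm_num) d)).add
        (hzero ((-1:ℝ) + 2*1) e he0)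
      have hlim' := hlim.congr fun t => (hform (-1) 1 t).symm
      simpa using hlim'
    · -- c ∈ S given e = d = 0 : k = 0, σ = 1
      intro he0 hd0
      refine hmain 0 1 c ?_
      have hlim := ((((htenneg ((0:ℝ) - 2*1) (by norm_num) a).add
        (htenneg ((0:ℝ) - 1) (by norm_num) b)).add
        (hten0 (0:ℝ) (by norm_num) c)).add
        (hzero ((0:ℝ) + 1) d hd0)).add
        (hzero ((0:ℝ) + 2*1) e he0)
      have hlim' := hlim.congr fun t => (hform 0 1 t).symm
      simpa using hlim'
    · -- b ∈ S given e = d = c = 0 : k = 1, σ = 1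
      intro he0 hd0 hc0
      refine hmain 1 1 b ?_
      have hlim := ((((htenneg ((1:ℝ) - 2*1) (by norm_num) a).add
        (hten0 ((1:ℝ) - 1) (by norm_num) b)).add
        (hzero (1:ℝ) c hc0)).add
        (hzero ((1:ℝ) + 1) d hd0)).add
        (hzero ((1:ℝ) + 2*1) e he0)
      have hlim' := hlim.congr fun t => (hform 1 1 t).symm
      simpa using hlim'
  -- pointedness helper
  have hpointed : ∀ y : V, y ∈ Ω → -y ∈ Ω → y = 0 := by
    intro y hy hny
    have : y ∈ Ω ∩ (-Ω) := ⟨hy, by simpa [Set.mem_neg] using hny⟩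
    rw [hΩpointed] at this
    exact this
  -- key lemma for V2
  have key2 : ∀ u v : V, u ∈ Ω → v ∈ Ω → u + v ∈ (V2 : Set V) →
      u ∈ (V2 : Set V) ∧ v ∈ (V2 : Set V) := by
    intro u v hu hv huv
    obtain ⟨a, ha, b, hb, c, hc, d, hd, e, he, hueq⟩ := decomp_exists' Vm2 Vm1 V0 V1 V2 hdirect u
    obtain ⟨a', ha', b', hb', c', hc', d', hd', e', he', hveq⟩ :=
      decomp_exists' Vm2 Vm1 V0 V1 V2 hdirect v
    have hzero : (a + a') + (b + b') + (c + c') + (d + d') + ((e + e') - (u + v)) = 0 := by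
      rw [hueq, hveq]; abel
    obtain ⟨haa, hbb, hcc, hdd, _⟩ := decomp_zero' Vm2 Vm1 V0 V1 V2 hdirect
      (add_mem ha ha') (add_mem hb hb') (add_mem hc hc') (add_mem hd hd')
      (sub_mem (add_mem he he') huv) hzero
    obtain ⟨haS, -, hbS, hcS, hdS, -, -, -⟩ :=
      master Ω hΩclosed hΩsmul hΩinv u a b c d e ha hb hc hd he hueq hu
    obtain ⟨haS', -, hbS', hcS', hdS', -, -, -⟩ :=
      master Ω hΩclosed hΩsmul hΩinv v a' b' c' d' e' ha' hb' hc' hd' he' hveq hv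
    have ha0 : a = 0 := hpointed a haS (by rw [neg_eq_of_add_eq_zero_right haa]; exact haS')
    have ha0' : a' = 0 := by rwa [ha0, zero_add] at haa
    have hb0 : b = 0 := by
      have : b ∈ Ω ∩ (Vm1 : Set V) := ⟨hbS ha0, hb⟩
      rw [hVm1] at this; exact this
    have hb0' : b' = 0 := by
      have : b' ∈ Ω ∩ (Vm1 : Set V) := ⟨hbS' ha0', hb'⟩
      rw [hVm1] at this; exact this
    have hc0 : c = 0 := hpointed c (hcS ha0 hb0)
      (by rw [neg_eq_of_add_eq_zero_right hcc]; exact hcS' ha0' hb0')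
    have hc0' : c' = 0 := by rwa [hc0, zero_add] at hcc
    have hd0 : d = 0 := by
      have : d ∈ Ω ∩ (V1 : Set V) := ⟨hdS ha0 hb0 hc0, hd⟩
      rw [hV1] at this; exact this
    have hd0' : d' = 0 := by
      have : d' ∈ Ω ∩ (V1 : Set V) := ⟨hdS' ha0' hb0' hc0', hd'⟩
      rw [hV1] at this; exact this
    constructor
    · show u ∈ V2
      rw [hueq, ha0, hb0, hc0, hd0]
      simpa using he
    · show v ∈ V2
      rw [hveq, ha0', hb0', hc0', hd0']
      simpa using he'
  -- key lemma for Vm2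
  have keym2 : ∀ u v : V, u ∈ Ω → v ∈ Ω → u + v ∈ (Vm2 : Set V) →
      u ∈ (Vm2 : Set V) ∧ v ∈ (Vm2 : Set V) := by
    intro u v hu hv huv
    obtain ⟨a, ha, b, hb, c, hc, d, hd, e, he, hueq⟩ := decomp_exists' Vm2 Vm1 V0 V1 V2 hdirect u
    obtain ⟨a', ha', b', hb', c', hc', d', hd', e', he', hveq⟩ :=
      decomp_exists' Vm2 Vm1 V0 V1 V2 hdirect v
    have hzero : ((a + a') - (u + v)) + (b + b') + (c + c') + (d + d') + (e + e') = 0 := by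
      rw [hueq, hveq]; abel
    obtain ⟨_, hbb, hcc, hdd, hee⟩ := decomp_zero' Vm2 Vm1 V0 V1 V2 hdirect
      (sub_mem (add_mem ha ha') huv) (add_mem hb hb') (add_mem hc hc') (add_mem hd hd')
      (add_mem he he') hzero
    obtain ⟨-, heS, -, -, -, hdS, hcS, hbS⟩ :=
      master Ω hΩclosed hΩsmul hΩinv u a b c d e ha hb hc hd he hueq hu
    obtain ⟨-, heS', -, -, -, hdS', hcS', hbS'⟩ :=
      master Ω hΩclosed hΩsmul hΩinv v a' b' c' d' e' ha' hb' hc' hd' he' hveq hv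
    have he0 : e = 0 := hpointed e heS (by rw [neg_eq_of_add_eq_zero_right hee]; exact heS')
    have he0' : e' = 0 := by rwa [he0, zero_add] at hee
    have hd0 : d = 0 := by
      have : d ∈ Ω ∩ (V1 : Set V) := ⟨hdS he0, hd⟩
      rw [hV1] at this; exact this
    have hd0' : d' = 0 := by
      have : d' ∈ Ω ∩ (V1 : Set V) := ⟨hdS' he0', hd'⟩
      rw [hV1] at this; exact this
    have hc0 : c = 0 := hpointed c (hcS he0 hd0)
      (by rw [neg_eq_of_add_eq_zero_right hcc]; exact hcS' he0' hd0')
    have hc0' : c' = 0 := by rwa [hc0, zero_add] at hcc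
    have hb0 : b = 0 := by
      have : b ∈ Ω ∩ (Vm1 : Set V) := ⟨hbS he0 hd0 hc0, hb⟩
      rw [hVm1] at this; exact this
    have hb0' : b' = 0 := by
      have : b' ∈ Ω ∩ (Vm1 : Set V) := ⟨hbS' he0' hd0' hc0', hb'⟩
      rw [hVm1] at this; exact this
    constructor
    · show u ∈ Vm2
      rw [hueq, hb0, hc0, hd0, he0]
      simpa using ha
    · show v ∈ Vm2
      rw [hveq, hb0', hc0', hd0', he0']
      simpa using ha'
  -- generic extremeness argument
  have extreme_of_key : ∀ W : Submodule ℝ V,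
      (∀ u v : V, u ∈ Ω → v ∈ Ω → u + v ∈ (W : Set V) →
        u ∈ (W : Set V) ∧ v ∈ (W : Set V)) →
      IsExtreme ℝ Ω (F ∩ (W : Set V)) := by
    intro W hkey
    constructor
    · exact fun z hz => hFsub hz.1
    · intro x hx y hy z hz hseg
      have hxF := hFface.2 hx hy hz.1 hseg
      obtain ⟨s, r, hs, hr, hsr, hzeq⟩ := hseg
      have hu : s • x ∈ Ω := hΩsmul s hs x hx
      have hv : r • y ∈ Ω := hΩsmul r hr y hy
      have hsum : s • x + r • y ∈ (W : Set V) := by rw [hzeq]; exact hz.2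
      obtain ⟨hxW, hyW⟩ := hkey _ _ hu hv hsum
      refine ⟨hxF, ?_⟩
      have := W.smul_mem s⁻¹ hxW
      rwa [smul_smul, inv_mul_cancel₀ (ne_of_gt hs), one_smul] at this
  refine ⟨⟨hFconvex.inter V2.convex, extreme_of_key V2 key2⟩,
    ⟨hFconvex.inter Vm2.convex, extreme_of_key Vm2 keym2⟩, ?_⟩
  ext z
  constructor
  · rintro ⟨hzF, hzsp⟩
    obtain ⟨p, hp, q, hq, hpq⟩ := Submodule.mem_sup.mp hzsp
    have hzeq : z = p + 0 + 0 + 0 + q := by rw [← hpq]; abel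
    obtain ⟨hpF, hqF, -, -, -, -, -, -⟩ :=
      master F hFclosed hFsmul hFinv' z p 0 0 0 q hp (zero_mem _) (zero_mem _) (zero_mem _)
        hq hzeq hzF
    exact ⟨p, ⟨hpF, hp⟩, q, ⟨hqF, hq⟩, hpq⟩
  · rintro ⟨p, ⟨hpF, hp2⟩, q, ⟨hqF, hq2⟩, rfl⟩
    constructor
    · have hhalf : (1/2 : ℝ) • p + (1/2 : ℝ) • q ∈ F :=
        hFconvex hpF hqF (by norm_num) (by norm_num) (by norm_num)
      have := hFsmul 2 (by norm_num) _ hhalf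
      rwa [smul_add, smul_smul, smul_smul, show (2:ℝ) * (1/2) = 1 by norm_num, one_smul,
        one_smul] at this
    · exact Submodule.mem_sup.mpr ⟨p, hp2, q, hq2, rfl⟩
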